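/- arXiv:2110.06454 — 3 statements merged into one kernel-verified Lean document; each statement's English description precedes it below -/
import Mathlib

section
/- (MEF-Theorem) Fix X₂ ≠ 0 and regard the ecological function E_F = P_O − Φ as a function of X₁ alone. Then the derivative of X₁ ↦ E_F(X₁, X₂) vanishes at a point X₁ if and only if the driven flux satisfies J₁ = −(1/3)·L₁₁·X₁ at that point. -/
/-- The driven flux `J₁ = L₁₁·X₁ + q·√(L₁₁·L₂₂)·X₂`. -/
noncomputable def fluxJ1 (L11 L22 q X2 X1 : ℝ) : ℝ :=
  L11 * X1 + q * Real.sqrt (L11 * L22) * X2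

/-- The conjugate flux `J₂ = q·√(L₁₁·L₂₂)·X₁ + L₂₂·X₂`. -/
noncomputable def fluxJ2 (L11 L22 q X2 X1 : ℝ) : ℝ :=
  q * Real.sqrt (L11 * L22) * X1 + L22 * X2

/-- The power output `P_O(X₁, X₂) = −T·J₁·X₁`. -/
noncomputable def powerOut (T L11 L22 q X2 X1 : ℝ) : ℝ :=
  -(T * (fluxJ1 L11 L22 q X2 X1 * X1))

/-- The dissipation function `Φ(X₁, X₂) = T·(J₁·X₁ + J₂·X₂)`. -/
noncomputable def dissip (T L11 L22 q X2 X1 : ℝ) : ℝ :=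
  T * (fluxJ1 L11 L22 q X2 X1 * X1 + fluxJ2 L11 L22 q X2 X1 * X2)

/-- The ecological function `E_F = P_O − Φ`. -/
noncomputable def ecolF (T L11 L22 q X2 X1 : ℝ) : ℝ :=
  powerOut T L11 L22 q X2 X1 - dissip T L11 L22 q X2 X1

/-! `E_F = -T·(2·J₁·X₁ + J₂·X₂)`, and differentiating in `X₁` gives
`-T·(2·J₁ + 2·L₁₁·X₁ + q·√(L₁₁·L₂₂)·X₂)`. Substituting `q·√(L₁₁·L₂₂)·X₂ = J₁ - L₁₁·X₁` turns this into `-T·(3·J₁ + L₁₁·X₁)`, which vanishes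
exactly when `J₁ = -(1/3)·L₁₁·X₁` since `T ≠ 0`. -/

section

variable (T L11 L22 q X2 X1 : ℝ)

theorem hasDerivAt_fluxJ1 : HasDerivAt (fluxJ1 L11 L22 q X2) L11 X1 := by
  unfold fluxJ1
  simpa using ((hasDerivAt_id X1).const_mul L11).add_const (q * Real.sqrt (L11 * L22) * X2)

theorem hasDerivAt_fluxJ2 :
    HasDerivAt (fluxJ2 L11 L22 q X2) (q * Real.sqrt (L11 * L22)) X1 := by
  unfold fluxJ2
  simpa using ((hasDerivAt_id X1).const_mul (q * Real.sqrt (L11 * L22))).add_const (L22 * X2)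

theorem ecolF_eq : ecolF T L11 L22 q X2 X1 =
    -T * (2 * (fluxJ1 L11 L22 q X2 X1 * X1) + fluxJ2 L11 L22 q X2 X1 * X2) := by
  simp only [ecolF, powerOut, dissip]
  ring

theorem hasDerivAt_ecolF : HasDerivAt (ecolF T L11 L22 q X2)
    (-T * (3 * fluxJ1 L11 L22 q X2 X1 + L11 * X1)) X1 := by
  have hJ1X1 := (hasDerivAt_fluxJ1 L11 L22 q X2 X1).fun_mul (hasDerivAt_id' X1)
  have hJ2X2 := (hasDerivAt_fluxJ2 L11 L22 q X2 X1).mul_const X2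
  have h := ((hJ1X1.const_mul 2).add hJ2X2).const_mul (-T)
  rw [show ecolF T L11 L22 q X2 = _ from funext (ecolF_eq T L11 L22 q X2)]
  refine h.congr_deriv ?_
  simp only [fluxJ1]
  ring

end

theorem MEF_theorem_general (T L11 L22 q X2 : ℝ) (hT : 0 < T) (X1 : ℝ) :
    deriv (fun y : ℝ => ecolF T L11 L22 q X2 y) X1 = 0 ↔
      fluxJ1 L11 L22 q X2 X1 = -(1 / 3) * (L11 * X1) := by
  rw [(hasDerivAt_ecolF T L11 L22 q X2 X1).deriv, mul_eq_zero, neg_eq_zero,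
    or_iff_right hT.ne']
  constructor <;> intro h <;> linarith

/-- (MEF-Theorem) For fixed `X₂ ≠ 0`, the derivative of `X₁ ↦ E_F(X₁, X₂)` vanishes at `X₁`
iff the driven flux satisfies `J₁ = −(1/3)·L₁₁·X₁` there. -/
theorem MEF_theorem (T L11 L22 q X2 : ℝ) (hT : 0 < T) (hL11 : 0 < L11) (hL22 : 0 < L22)
    (hX2 : X2 ≠ 0) (X1 : ℝ) :
    deriv (fun y : ℝ => ecolF T L11 L22 q X2 y) X1 = 0 ↔
      fluxJ1 L11 L22 q X2 X1 = -(1 / 3) * (L11 * X1) :=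
  MEF_theorem_general T L11 L22 q X2 hT X1
end

section
/- (MPη-Corollary) Assume 0 < q < 1, X₂ > 0, the force ratio x = √(L₁₁/L₂₂)·X₁/X₂ satisfies −1 < x < 0, and the driven flux satisfies J₁ = −((2 − η)/(2 + η))·L₁₁·X₁ where η = −(J₁·X₁)/(J₂·X₂). Then x = −(4 + q² − √(16 − 16·q² + q⁴))/(6·q). -/
/-- The efficiency `η = −(J₁·X₁)/(J₂·X₂)`. -/
noncomputable def eff (L11 L22 q X2 X1 : ℝ) : ℝ :=
  -(fluxJ1 L11 L22 q X2 X1 * X1) / (fluxJ2 L11 L22 q X2 X1 * X2)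

/-!
Writing `x` for the force ratio and `s = √(L₁₁/L₂₂)`, one has `J₁ = L₂₂X₂s(x + q)`,
`J₂ = L₂₂X₂(qx + 1)`, `L₁₁X₁ = L₂₂X₂s·x` and `η = −x(x + q)/(qx + 1)`. The flux condition
therefore becomes `x + q = −((2 − η)/(2 + η))·x`, which clears to the quadratic
`3q·x² + (4 + q²)·x + 2q = 0` with discriminant `16 − 16q² + q⁴`. Its smaller root lies below
`−1` when `0 < q < 1`, so `x > −1` singles out the larger one.
-/

open Real

noncomputable def forceRatio (L11 L22 X1 X2 : ℝ) : ℝ :=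
  √(L11 / L22) * X1 / X2

noncomputable def effOfRatio (q x : ℝ) : ℝ :=
  -x * (x + q) / (q * x + 1)

lemma sqrt_mul_eq_mul_sqrt_div (a : ℝ) {b : ℝ} (hb : 0 < b) : √(a * b) = b * √(a / b) := by
  rw [show a * b = b ^ 2 * (a / b) by field_simp, sqrt_mul (by positivity), sqrt_sq hb.le]

lemma sqrt_div_mul_eq_mul_forceRatio (L11 L22 : ℝ) {X1 X2 : ℝ} (hX2 : X2 ≠ 0) :
    √(L11 / L22) * X1 = X2 * forceRatio L11 L22 X1 X2 := by
  rw [forceRatio]; field_simp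

section FluxesInForceRatio

variable {L11 L22 q X1 X2 : ℝ}

lemma mul_X1_eq_forceRatio (hL11 : 0 ≤ L11) (hL22 : 0 < L22) (hX2 : X2 ≠ 0) :
    L11 * X1 = L22 * X2 * √(L11 / L22) * forceRatio L11 L22 X1 X2 := by
  have hsq : √(L11 / L22) ^ 2 * L22 = L11 := by
    rw [sq_sqrt (div_nonneg hL11 hL22.le)]; field_simp
  linear_combination
    -X1 * hsq + L22 * √(L11 / L22) * sqrt_div_mul_eq_mul_forceRatio L11 L22 hX2

lemma fluxJ1_eq_forceRatio (hL11 : 0 ≤ L11) (hL22 : 0 < L22) (hX2 : X2 ≠ 0) :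
    fluxJ1 L11 L22 q X2 X1 = L22 * X2 * √(L11 / L22) * (forceRatio L11 L22 X1 X2 + q) := by
  rw [fluxJ1, mul_X1_eq_forceRatio hL11 hL22 hX2, sqrt_mul_eq_mul_sqrt_div L11 hL22]
  ring

lemma fluxJ2_eq_forceRatio (hL22 : 0 < L22) (hX2 : X2 ≠ 0) :
    fluxJ2 L11 L22 q X2 X1 = L22 * X2 * (q * forceRatio L11 L22 X1 X2 + 1) := by
  rw [fluxJ2, sqrt_mul_eq_mul_sqrt_div L11 hL22]
  linear_combination L22 * q * sqrt_div_mul_eq_mul_forceRatio L11 L22 hX2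

lemma eff_eq_effOfRatio (hL11 : 0 ≤ L11) (hL22 : 0 < L22) (hX2 : X2 ≠ 0) :
    eff L11 L22 q X2 X1 = effOfRatio q (forceRatio L11 L22 X1 X2) := by
  set x := forceRatio L11 L22 X1 X2
  have hnum : fluxJ1 L11 L22 q X2 X1 * X1 = (L22 * X2 ^ 2) * (x * (x + q)) := by
    rw [fluxJ1_eq_forceRatio hL11 hL22 hX2]
    linear_combination L22 * X2 * (x + q) * sqrt_div_mul_eq_mul_forceRatio L11 L22 hX2
  have hden : fluxJ2 L11 L22 q X2 X1 * X2 = (L22 * X2 ^ 2) * (q * x + 1) := by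
    rw [fluxJ2_eq_forceRatio hL22 hX2]; ring
  rw [eff, effOfRatio, hnum, hden, neg_div, mul_div_mul_left _ _ (by positivity), neg_mul, neg_div]

end FluxesInForceRatio

lemma quadratic_of_flux_condition {q x : ℝ} (hden : q * x + 1 ≠ 0)
    (h : x + q = -((2 - effOfRatio q x) / (2 + effOfRatio q x)) * x) :
    3 * q * x ^ 2 + (4 + q ^ 2) * x + 2 * q = 0 := by
  have heff : effOfRatio q x * (q * x + 1) = -x * (x + q) := div_mul_cancel₀ _ hden
  have h2 : 2 + effOfRatio q x ≠ 0 := by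
    intro h2
    rw [h2, div_zero, neg_zero, zero_mul] at h
    have : effOfRatio q x = 0 := by
      simpa [h, hden] using heff
    linarith
  have hcleared : (x + q) * (2 + effOfRatio q x) = -(2 - effOfRatio q x) * x := by
    rw [h]; field_simp
  linear_combination (q * x + 1) * hcleared - q * heff

lemma discrim_flux_quadratic {q : ℝ} (hq : q ^ 2 ≤ 1) :
    discrim (3 * q) (4 + q ^ 2) (2 * q) =
      √(16 - 16 * q ^ 2 + q ^ 4) * √(16 - 16 * q ^ 2 + q ^ 4) := by
  rw [mul_self_sqrt (by nlinarith [sq_nonneg (q ^ 2)]), discrim]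
  ring

lemma smaller_root_lt_neg_one {q : ℝ} (hq0 : 0 < q) (hq1 : q < 1) :
    (-(4 + q ^ 2) - √(16 - 16 * q ^ 2 + q ^ 4)) / (2 * (3 * q)) < -1 := by
  have hD : 6 * q - 4 - q ^ 2 < √(16 - 16 * q ^ 2 + q ^ 4) := by
    apply lt_sqrt_of_sq_lt
    -- the gap is `12q(1 - q)(4 - q)`
    nlinarith [mul_pos (mul_pos hq0 (sub_pos.2 hq1)) (show (0 : ℝ) < 4 - q by linarith)]
  rw [div_lt_iff₀ (by positivity)]
  linarith

lemma eq_larger_root_of_quadratic {q x : ℝ} (hq0 : 0 < q) (hq1 : q < 1) (hx : -1 < x)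
    (h : 3 * q * x ^ 2 + (4 + q ^ 2) * x + 2 * q = 0) :
    x = -(4 + q ^ 2 - √(16 - 16 * q ^ 2 + q ^ 4)) / (6 * q) := by
  rcases (quadratic_eq_zero_iff (by positivity) (discrim_flux_quadratic (by nlinarith)) x).1
      (by linear_combination h) with hroot | hroot
  · rw [hroot]; ring
  · exact absurd (hroot ▸ smaller_root_lt_neg_one hq0 hq1) hx.not_gt

theorem MPeta_corollary_general (L11 L22 q X1 X2 : ℝ) (hL11 : 0 < L11) (hL22 : 0 < L22)
    (hq0 : 0 < q) (hq1 : q < 1) (hX2 : 0 < X2)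
    (hx1 : -1 < Real.sqrt (L11 / L22) * X1 / X2)
    (hJ1 : fluxJ1 L11 L22 q X2 X1 =
      -((2 - eff L11 L22 q X2 X1) / (2 + eff L11 L22 q X2 X1)) * (L11 * X1)) :
    Real.sqrt (L11 / L22) * X1 / X2 =
      -(4 + q ^ 2 - Real.sqrt (16 - 16 * q ^ 2 + q ^ 4)) / (6 * q) := by
  change -1 < forceRatio L11 L22 X1 X2 at hx1
  change forceRatio L11 L22 X1 X2 = _
  set x := forceRatio L11 L22 X1 X2
  rw [fluxJ1_eq_forceRatio hL11.le hL22 hX2.ne', eff_eq_effOfRatio hL11.le hL22 hX2.ne',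
    mul_X1_eq_forceRatio hL11.le hL22 hX2.ne'] at hJ1
  have hscale : L22 * X2 * √(L11 / L22) ≠ 0 := by
    have := sqrt_pos.2 (div_pos hL11 hL22)
    positivity
  have hcond : x + q = -((2 - effOfRatio q x) / (2 + effOfRatio q x)) * x :=
    mul_left_cancel₀ hscale (by linear_combination hJ1)
  have hden : q * x + 1 ≠ 0 := by nlinarith
  exact eq_larger_root_of_quadratic hq0 hq1 hx1 (quadratic_of_flux_condition hden hcond)

/-- (MPη-Corollary) If `0 < q < 1`, `X₂ > 0`, the force ratio `x = √(L₁₁/L₂₂)·X₁/X₂`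
satisfies `−1 < x < 0`, and the driven flux satisfies `J₁ = −((2 − η)/(2 + η))·L₁₁·X₁`,
then `x = −(4 + q² − √(16 − 16·q² + q⁴))/(6·q)`. -/
theorem MPeta_corollary (L11 L22 q X1 X2 : ℝ) (hL11 : 0 < L11) (hL22 : 0 < L22)
    (hq0 : 0 < q) (hq1 : q < 1) (hX2 : 0 < X2)
    (hx1 : -1 < Real.sqrt (L11 / L22) * X1 / X2)
    (hx2 : Real.sqrt (L11 / L22) * X1 / X2 < 0)
    (hJ1 : fluxJ1 L11 L22 q X2 X1 =
      -((2 - eff L11 L22 q X2 X1) / (2 + eff L11 L22 q X2 X1)) * (L11 * X1)) :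
    Real.sqrt (L11 / L22) * X1 / X2 =
      -(4 + q ^ 2 - Real.sqrt (16 - 16 * q ^ 2 + q ^ 4)) / (6 * q) :=
  MPeta_corollary_general L11 L22 q X1 X2 hL11 hL22 hq0 hq1 hX2 hx1 hJ1
end

section
/- (Power-output hierarchy, Eq. 7b) Let T > 0, L₂₂ > 0, X₂ ≠ 0 and let q satisfy 2√2/3 < q < 1. Then the reduced power output P(x) = −T·L₂₂·X₂²·x·(x + q), evaluated at the six optimal force ratios, satisfies the strict chain P(x_mdf) < P(x_Mη) < P(x_MEF) < P(x_MΩ) < P(x_MPη) < P(x_MPO), where P(x_mdf) = 0. -/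
/-- Optimal force ratio for minimum dissipation function: `x_mdf = −q`. -/
noncomputable def xmdf (q : ℝ) : ℝ := -q

/-- Optimal force ratio for maximum power output: `x_MPO = −q/2`. -/
noncomputable def xMPO (q : ℝ) : ℝ := -q / 2

/-- Optimal force ratio for maximum efficiency: `x_Mη = −q/(1 + √(1 − q²))`. -/
noncomputable def xMeta (q : ℝ) : ℝ := -q / (1 + Real.sqrt (1 - q ^ 2))

/-- Optimal force ratio for maximum ecological function: `x_MEF = −3q/4`. -/
noncomputable def xMEF (q : ℝ) : ℝ := -(3 * q) / 4

/-- Optimal force ratio for maximum omega function: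
`x_MΩ = −q·(4 − q² + 4√(1 − q²))/(4·(1 + √(1 − q²))²)`. -/
noncomputable def xMOmega (q : ℝ) : ℝ :=
  -(q * (4 - q ^ 2 + 4 * Real.sqrt (1 - q ^ 2))) / (4 * (1 + Real.sqrt (1 - q ^ 2)) ^ 2)

/-- Optimal force ratio for maximum efficient power:
`x_MPη = −(4 + q² − √(16 − 16q² + q⁴))/(6q)`. -/
noncomputable def xMPeta (q : ℝ) : ℝ :=
  -(4 + q ^ 2 - Real.sqrt (16 - 16 * q ^ 2 + q ^ 4)) / (6 * q)

/-- Reduced power output `P(x) = −T·L₂₂·X₂²·x·(x + q)`. -/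
noncomputable def powerX (T L22 X2 q x : ℝ) : ℝ :=
  -(T * L22 * X2 ^ 2 * (x * (x + q)))

/-! With `c = T·L₂₂·X₂² > 0` we have `P(x) = c·(q²/4 − (x + q/2)²)`, so `P` is strictly increasing
on `x ≤ −q/2 = x_MPO`. The hierarchy therefore follows from the chain of force ratios
`−q < x_Mη < x_MEF < x_MΩ < x_MPη < −q/2`. Writing `s = √(1 − q²)`, each link is a polynomial
inequality in `s`; only `x_Mη < x_MEF`, which amounts to `s < 1/3`, needs `q > 2√2/3`. -/

open Set

theorem powerX_strictMonoOn_Iic_xMPO {T L22 X2 : ℝ} (hT : 0 < T) (hL22 : 0 < L22)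
    (hX2 : X2 ≠ 0) (q : ℝ) : StrictMonoOn (powerX T L22 X2 q) (Iic (xMPO q)) := by
  intro x hx y hy hxy
  rw [mem_Iic, xMPO] at hx hy
  have hc : 0 < T * L22 * X2 ^ 2 := by positivity
  have hsum : x + y + q < 0 := by linarith
  have key : powerX T L22 X2 q y - powerX T L22 X2 q x
      = T * L22 * X2 ^ 2 * ((x - y) * (x + y + q)) := by
    unfold powerX; ring
  have hprod : 0 < (x - y) * (x + y + q) := mul_pos_of_neg_of_neg (by linarith) hsum
  linarith [mul_pos hc hprod]

theorem powerX_xmdf (T L22 X2 q : ℝ) : powerX T L22 X2 q (xmdf q) = 0 := by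
  simp [powerX, xmdf]

theorem xmdf_lt_xMeta {q : ℝ} (hq0 : 0 < q) (hq1 : q < 1) : xmdf q < xMeta q := by
  have hs : 0 < Real.sqrt (1 - q ^ 2) := Real.sqrt_pos.mpr (by nlinarith)
  rw [xmdf, xMeta, neg_div, neg_lt_neg_iff, div_lt_iff₀ (by linarith)]
  nlinarith

theorem xMeta_lt_xMEF {q : ℝ} (hq0 : 0 < q) (hq : 8 / 9 < q ^ 2) : xMeta q < xMEF q := by
  have hs : Real.sqrt (1 - q ^ 2) < 1 / 3 := by
    rw [Real.sqrt_lt' (by norm_num)]; linarith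
  have hs0 := Real.sqrt_nonneg (1 - q ^ 2)
  rw [xMeta, xMEF, neg_div, neg_div, neg_lt_neg_iff, div_lt_div_iff₀ (by norm_num) (by linarith)]
  nlinarith

theorem xMEF_lt_xMOmega {q : ℝ} (hq0 : 0 < q) (hq1 : q < 1) : xMEF q < xMOmega q := by
  have hs : 0 < Real.sqrt (1 - q ^ 2) := Real.sqrt_pos.mpr (by nlinarith)
  have hs2 : Real.sqrt (1 - q ^ 2) ^ 2 = 1 - q ^ 2 := Real.sq_sqrt (by nlinarith)
  rw [xMEF, xMOmega, neg_div, neg_div, neg_lt_neg_iff, div_lt_div_iff₀ (by positivity) (by norm_num)]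
  nlinarith [mul_pos hq0 hs]

theorem xMOmega_lt_xMPeta {q : ℝ} (hq0 : 0 < q) (hq1 : q < 1) : xMOmega q < xMPeta q := by
  set s := Real.sqrt (1 - q ^ 2) with hs_def
  have hs0 : 0 ≤ s := Real.sqrt_nonneg _
  have hs2 : s ^ 2 = 1 - q ^ 2 := Real.sq_sqrt (by nlinarith)
  have hs1 : s < 1 := by nlinarith
  -- `16 − 16q² + q⁴ = s⁴ + 14s² + 1`, and `4(s⁴ + 14s² + 1) − (s² + 6s + 1)² = 3(1 − s)⁴`.
  have hr : (s ^ 2 + 6 * s + 1) / 2 < Real.sqrt (16 - 16 * q ^ 2 + q ^ 4) := by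
    rw [Real.lt_sqrt (by positivity)]
    nlinarith [pow_pos (sub_pos.mpr hs1) 4]
  have hΩ : xMOmega q = -(q * (s + 3)) / (4 * (1 + s)) := by
    rw [xMOmega, ← hs_def, show 4 - q ^ 2 + 4 * s = (1 + s) * (s + 3) by linear_combination -hs2]
    field_simp
  rw [hΩ, xMPeta, neg_div, neg_div, neg_lt_neg_iff, div_lt_div_iff₀ (by positivity) (by positivity)]
  nlinarith [mul_pos (show 0 < 1 + s by linarith) (sub_pos.mpr hr)]

theorem xMPeta_lt_xMPO {q : ℝ} (hq0 : 0 < q) (hq : q ^ 2 < 2) : xMPeta q < xMPO q := by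
  have hr : Real.sqrt (16 - 16 * q ^ 2 + q ^ 4) < 4 - 2 * q ^ 2 := by
    rw [Real.sqrt_lt' (by linarith)]; nlinarith [pow_pos hq0 4]
  rw [xMPeta, xMPO, neg_div, neg_div, neg_lt_neg_iff, div_lt_div_iff₀ (by norm_num) (by positivity)]
  nlinarith

/-- (Power-output hierarchy, Eq. 7b) For `2√2/3 < q < 1`, the reduced power output
evaluated at the six optimal force ratios satisfies
`P(x_mdf) < P(x_Mη) < P(x_MEF) < P(x_MΩ) < P(x_MPη) < P(x_MPO)`, with `P(x_mdf) = 0`. -/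
theorem power_hierarchy (T L22 X2 q : ℝ) (hT : 0 < T) (hL22 : 0 < L22)
    (hX2 : X2 ≠ 0) (hq0 : 2 * Real.sqrt 2 / 3 < q) (hq1 : q < 1) :
    powerX T L22 X2 q (xmdf q) = 0 ∧
    powerX T L22 X2 q (xmdf q) < powerX T L22 X2 q (xMeta q) ∧
    powerX T L22 X2 q (xMeta q) < powerX T L22 X2 q (xMEF q) ∧
    powerX T L22 X2 q (xMEF q) < powerX T L22 X2 q (xMOmega q) ∧
    powerX T L22 X2 q (xMOmega q) < powerX T L22 X2 q (xMPeta q) ∧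
    powerX T L22 X2 q (xMPeta q) < powerX T L22 X2 q (xMPO q) := by
  have hq : 0 < q := lt_trans (by positivity) hq0
  have hq2 : 8 / 9 < q ^ 2 := by
    nlinarith [Real.sq_sqrt zero_le_two, Real.sqrt_nonneg 2]
  have h1 := xmdf_lt_xMeta hq hq1
  have h2 := xMeta_lt_xMEF hq hq2
  have h3 := xMEF_lt_xMOmega hq hq1
  have h4 := xMOmega_lt_xMPeta hq hq1
  have h5 := xMPeta_lt_xMPO hq (by nlinarith)
  have hP := powerX_strictMonoOn_Iic_xMPO hT hL22 hX2 q
  refine ⟨powerX_xmdf .., hP ?_ ?_ h1, hP ?_ ?_ h2, hP ?_ ?_ h3, hP ?_ ?_ h4, hP ?_ ?_ h5⟩ <;>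
    exact mem_Iic.mpr (by linarith)
end
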